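/- arXiv:2306.15260 — 2 statements merged into one kernel-verified Lean document; each statement's English description precedes it below -/
import Mathlib

section
/- Let γ > 1, σ ≥ 0, c = 1/γ, and ρ* = (1 − 2/π + σ²)/((2/π)γ). Let λ be a random variable with law μ_c and d = √λ. For a measurable function f : (0,∞) → (0,∞) with E[λ f(√λ)²] < ∞ and E[f(√λ)²] < ∞, define SNR(f) = (E[d f(d)])² / ( Var[d f(d)] + ρ* E[f(d)²] ). If f attains the maximum value of SNR (namely SNR(f) = m/(1−m) with m = E[λ/(λ+ρ*)]), then there exists α > 0 such that f(x) = √α · x/(x² + ρ*) for Lebesgue-almost every x in the interval (√a, √b), where a = (1−√c)² and b = (1+√c)². -/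
open MeasureTheory Real

/-- The Marchenko–Pastur density `p_c`. -/
noncomputable def mpDensity (c x : ℝ) : ℝ :=
  Real.sqrt (max (x - (1 - Real.sqrt c) ^ 2) 0 * max ((1 + Real.sqrt c) ^ 2 - x) 0) /
    (2 * Real.pi * c * x)

/-- The Marchenko–Pastur distribution `μ_c` on `(0, ∞)`. -/
noncomputable def mpMeasure (c : ℝ) : Measure ℝ :=
  (volume.restrict (Set.Ioi (0 : ℝ))).withDensity fun x => ENNReal.ofReal (mpDensity c x)

/-- `SNR(f) = (E[d f(d)])² / (Var[d f(d)] + ρ E[f(d)²])` where `d = √λ`, `λ ~ μ_c`. -/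
noncomputable def SNR (c ρ : ℝ) (f : ℝ → ℝ) : ℝ :=
  (∫ x, Real.sqrt x * f (Real.sqrt x) ∂mpMeasure c) ^ 2 /
    (((∫ x, (Real.sqrt x * f (Real.sqrt x)) ^ 2 ∂mpMeasure c) -
        (∫ x, Real.sqrt x * f (Real.sqrt x) ∂mpMeasure c) ^ 2) +
      ρ * ∫ x, f (Real.sqrt x) ^ 2 ∂mpMeasure c)

lemma mpDensity_meas (c : ℝ) : Measurable (fun x => ENNReal.ofReal (mpDensity c x)) := by
  unfold mpDensity; fun_prop

lemma mpDensity_pos {c x : ℝ} (hc0 : 0 < c)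
    (hx : x ∈ Set.Ioo ((1 - Real.sqrt c) ^ 2) ((1 + Real.sqrt c) ^ 2)) :
    0 < mpDensity c x := by
  obtain ⟨h1, h2⟩ := hx
  have hx0 : 0 < x := lt_of_le_of_lt (sq_nonneg _) h1
  have hnum : 0 < max (x - (1 - Real.sqrt c) ^ 2) 0 * max ((1 + Real.sqrt c) ^ 2 - x) 0 := by
    apply mul_pos <;> [skip; skip] <;> rw [lt_max_iff] <;> left <;> linarith
  exact div_pos (Real.sqrt_pos.mpr hnum) (by positivity)

lemma mp_finite {c : ℝ} (hc0 : 0 < c) (hc1 : c < 1) : IsFiniteMeasure (mpMeasure c) := by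
  set a := (1 - Real.sqrt c) ^ 2 with ha
  set b := (1 + Real.sqrt c) ^ 2 with hb
  have hsc1 : Real.sqrt c < 1 := by
    rw [show (1:ℝ) = Real.sqrt 1 by simp]
    exact Real.sqrt_lt_sqrt hc0.le hc1
  have hsc0 : 0 < Real.sqrt c := Real.sqrt_pos.mpr hc0
  have ha0 : 0 < a := by rw [ha]; exact pow_pos (by linarith) 2
  have hab : a < b := by nlinarith
  set C : ℝ := (b - a) / (2 * Real.pi * c * a) with hC
  have hbound : ∀ x : ℝ, ENNReal.ofReal (mpDensity c x) ≤
      Set.indicator (Set.Icc a b) (fun _ => ENNReal.ofReal C) x := by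
    intro x
    by_cases hx : x ∈ Set.Icc a b
    · rw [Set.indicator_of_mem hx]
      apply ENNReal.ofReal_le_ofReal
      obtain ⟨h1, h2⟩ := hx
      have hx0 : 0 < x := lt_of_lt_of_le ha0 h1
      have hnum : Real.sqrt (max (x - a) 0 * max (b - x) 0) ≤ b - a := by
        rw [show b - a = Real.sqrt ((b-a)^2) by rw [Real.sqrt_sq (by linarith)]]
        apply Real.sqrt_le_sqrt
        have e1 : max (x - a) 0 ≤ b - a := by simp [max_le_iff]; constructor <;> linarith
        have e2 : max (b - x) 0 ≤ b - a := by simp [max_le_iff]; constructor <;> linarith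
        have e3 : 0 ≤ max (x - a) 0 := le_max_right _ _
        nlinarith [le_max_right (b - x) (0:ℝ)]
      rw [hC]
      unfold mpDensity
      rw [div_le_div_iff₀ (by positivity) (by positivity)]
      have hpi : (0:ℝ) < Real.pi := Real.pi_pos
      have h0 : 0 ≤ Real.sqrt (max (x - a) 0 * max (b - x) 0) := Real.sqrt_nonneg _
      calc Real.sqrt (max (x - a) 0 * max (b - x) 0) * (2 * Real.pi * c * a)
          ≤ (b - a) * (2 * Real.pi * c * a) :=
            mul_le_mul_of_nonneg_right hnum (by positivity)
        _ ≤ (b - a) * (2 * Real.pi * c * x) :=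
            mul_le_mul_of_nonneg_left (mul_le_mul_of_nonneg_left h1 (by positivity))
              (by linarith)
    · rw [Set.indicator_of_notMem hx]
      simp only [Set.mem_Icc, not_and_or, not_le] at hx
      have : mpDensity c x = 0 := by
        unfold mpDensity
        rcases hx with hx | hx
        · rw [show max (x - (1 - Real.sqrt c) ^ 2) 0 = 0 from max_eq_right (by rw [← ha]; linarith),
            zero_mul, Real.sqrt_zero, zero_div]
        · rw [show max ((1 + Real.sqrt c) ^ 2 - x) 0 = 0 from max_eq_right (by rw [← hb]; linarith),
            mul_zero, Real.sqrt_zero, zero_div]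
      simp [this]
  constructor
  rw [mpMeasure, withDensity_apply _ MeasurableSet.univ, Measure.restrict_univ]
  calc ∫⁻ x, ENNReal.ofReal (mpDensity c x) ∂(volume.restrict (Set.Ioi 0))
      ≤ ∫⁻ x, Set.indicator (Set.Icc a b) (fun _ => ENNReal.ofReal C) x
          ∂(volume.restrict (Set.Ioi 0)) := lintegral_mono hbound
    _ ≤ ∫⁻ x, Set.indicator (Set.Icc a b) (fun _ => ENNReal.ofReal C) x ∂volume :=
        lintegral_mono' Measure.restrict_le_self le_rfl
    _ = ENNReal.ofReal C * volume (Set.Icc a b) := by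
        rw [lintegral_indicator measurableSet_Icc]; simp [mul_comm]
    _ < ⊤ := ENNReal.mul_lt_top ENNReal.ofReal_lt_top (by simp [Real.volume_Icc])

lemma mp_ae_pos (c : ℝ) : ∀ᵐ x ∂(mpMeasure c), 0 < x := by
  have h1 : ∀ᵐ x ∂(volume.restrict (Set.Ioi (0:ℝ))), 0 < x := by
    filter_upwards [ae_restrict_mem measurableSet_Ioi] with x hx using hx
  exact (withDensity_absolutelyContinuous _ _).ae_le h1

lemma vol_Ioo_ac {c : ℝ} (hc0 : 0 < c) (hc1 : c < 1) :
    volume.restrict (Set.Ioo ((1 - Real.sqrt c) ^ 2) ((1 + Real.sqrt c) ^ 2)) ≪ mpMeasure c := by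
  set a := (1 - Real.sqrt c) ^ 2
  set b := (1 + Real.sqrt c) ^ 2
  have ha0 : 0 < a := by
    have : Real.sqrt c < 1 := by
      rw [show (1:ℝ) = Real.sqrt 1 by simp]; exact Real.sqrt_lt_sqrt hc0.le hc1
    exact pow_pos (by linarith) 2
  refine Measure.AbsolutelyContinuous.mk fun N hN hμN => ?_
  rw [mpMeasure, withDensity_apply _ hN] at hμN
  rw [Measure.restrict_restrict hN] at hμN
  have hae := (setLIntegral_eq_zero_iff (hN.inter measurableSet_Ioi)
    (mpDensity_meas c)).mp hμN
  rw [Measure.restrict_apply hN]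
  rw [ae_iff] at hae
  refine measure_mono_null ?_ hae
  intro x hx
  simp only [Set.mem_setOf_eq]
  obtain ⟨hxN, hxIoo⟩ := (Set.mem_inter_iff _ _ _).mp hx
  intro h
  have := h ⟨hxN, lt_of_le_of_lt ha0.le hxIoo.1⟩
  exact absurd this (ENNReal.ofReal_pos.mpr (mpDensity_pos hc0 hxIoo)).ne'

lemma mp_Ioo_pos {c : ℝ} (hc0 : 0 < c) (hc1 : c < 1) :
    0 < mpMeasure c (Set.Ioo ((1 - Real.sqrt c) ^ 2) ((1 + Real.sqrt c) ^ 2)) := by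
  set a := (1 - Real.sqrt c) ^ 2 with ha
  set b := (1 + Real.sqrt c) ^ 2 with hb
  have hsc1 : Real.sqrt c < 1 := by
    rw [show (1:ℝ) = Real.sqrt 1 by simp]; exact Real.sqrt_lt_sqrt hc0.le hc1
  have hsc0 : 0 < Real.sqrt c := Real.sqrt_pos.mpr hc0
  have ha0 : 0 < a := pow_pos (by linarith) 2
  have hab : a < b := by rw [ha, hb]; nlinarith
  by_contra h
  push_neg at h
  have h0 : mpMeasure c (Set.Ioo a b) = 0 := le_antisymm h zero_le
  have := vol_Ioo_ac hc0 hc1 h0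
  rw [Measure.restrict_apply measurableSet_Ioo, Set.inter_self, Real.volume_Ioo] at this
  rw [ENNReal.ofReal_eq_zero] at this
  linarith

set_option maxHeartbeats 1000000 in
theorem stmt1 (γ σ : ℝ) (hγ : 1 < γ) (hσ : 0 ≤ σ)
    (c : ℝ) (hc : c = 1 / γ)
    (ρ : ℝ) (hρ : ρ = (1 - 2 / π + σ ^ 2) / ((2 / π) * γ))
    (m : ℝ) (hm : m = ∫ x, x / (x + ρ) ∂mpMeasure c)
    (f : ℝ → ℝ) (hmeas : Measurable f) (hpos : ∀ x > 0, 0 < f x)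
    (hint1 : Integrable (fun x => x * f (Real.sqrt x) ^ 2) (mpMeasure c))
    (hint2 : Integrable (fun x => f (Real.sqrt x) ^ 2) (mpMeasure c))
    (hopt : SNR c ρ f = m / (1 - m)) :
    ∃ α > 0,
      ∀ᵐ x ∂(volume.restrict
          (Set.Ioo (Real.sqrt ((1 - Real.sqrt c) ^ 2)) (Real.sqrt ((1 + Real.sqrt c) ^ 2)))),
        f x = Real.sqrt α * x / (x ^ 2 + ρ) := by
  have hγ0 : 0 < γ := lt_trans one_pos hγ
  have hc0 : 0 < c := by rw [hc]; positivity
  have hc1 : c < 1 := by rw [hc, div_lt_one hγ0]; exact hγ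
  have hπ : (0:ℝ) < π := Real.pi_pos
  have hπ2 : (2:ℝ) < π := by nlinarith [Real.pi_gt_three]
  have hρ0 : 0 < ρ := by
    rw [hρ]
    apply div_pos
    · have : 2 / π < 1 := by rw [div_lt_one hπ]; exact hπ2
      nlinarith [sq_nonneg σ]
    · positivity
  haveI : IsFiniteMeasure (mpMeasure c) := mp_finite hc0 hc1
  set μ := mpMeasure c with hμdef
  set a := (1 - Real.sqrt c) ^ 2 with hadef
  set b := (1 + Real.sqrt c) ^ 2 with hbdef
  have hsc1 : Real.sqrt c < 1 := by
    rw [show (1:ℝ) = Real.sqrt 1 by simp]; exact Real.sqrt_lt_sqrt hc0.le hc1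
  have hsc0 : 0 < Real.sqrt c := Real.sqrt_pos.mpr hc0
  have ha0 : 0 < a := pow_pos (by linarith) 2
  have hab : a < b := by rw [hadef, hbdef]; nlinarith
  set u : ℝ → ℝ := fun x => Real.sqrt x / Real.sqrt (x + ρ) with hudef
  set v : ℝ → ℝ := fun x => Real.sqrt (x + ρ) * f (Real.sqrt x) with hvdef
  have haex : ∀ᵐ x ∂μ, 0 < x := mp_ae_pos c
  have humeas : Measurable u := by rw [hudef]; fun_prop
  have hvmeas : Measurable v := by rw [hvdef]; fun_prop
  -- pointwise identities for x > 0
  have hu2 : ∀ x : ℝ, 0 < x → u x ^ 2 = x / (x + ρ) := by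
    intro x hx
    rw [hudef]
    simp only
    rw [div_pow, Real.sq_sqrt hx.le, Real.sq_sqrt (by linarith)]
  have huv : ∀ x : ℝ, 0 < x → u x * v x = Real.sqrt x * f (Real.sqrt x) := by
    intro x hx
    have h1 : (0:ℝ) < Real.sqrt (x + ρ) := Real.sqrt_pos.mpr (by linarith)
    rw [hudef, hvdef]
    simp only
    field_simp
  have hv2 : ∀ x : ℝ, 0 < x → v x ^ 2 = x * f (Real.sqrt x) ^ 2 + ρ * f (Real.sqrt x) ^ 2 := by
    intro x hx
    rw [hvdef]
    simp only
    rw [mul_pow, Real.sq_sqrt (by linarith)]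
    ring
  -- integrability
  have hIu2 : Integrable (fun x => u x ^ 2) μ := by
    refine (integrable_const (1:ℝ)).mono' (humeas.pow_const 2).aestronglyMeasurable ?_
    filter_upwards [haex] with x hx
    rw [Real.norm_eq_abs, abs_of_nonneg (sq_nonneg _), hu2 x hx]
    rw [div_le_one (by linarith)]; linarith
  have hIm : Integrable (fun x => x / (x + ρ)) μ := by
    refine Integrable.congr hIu2 ?_
    filter_upwards [haex] with x hx using hu2 x hx
  have hIv2 : Integrable (fun x => v x ^ 2) μ := by
    refine Integrable.congr (hint1.add (hint2.const_mul ρ)) ?_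
    filter_upwards [haex] with x hx using (hv2 x hx).symm
  have hIsq : Integrable (fun x => Real.sqrt x * f (Real.sqrt x)) μ := by
    refine ((hint1.add (integrable_const (1:ℝ))).div_const 2).mono'
      ((Real.continuous_sqrt.measurable.mul (hmeas.comp Real.continuous_sqrt.measurable)).aestronglyMeasurable) ?_
    filter_upwards [haex] with x hx
    have hs : (0:ℝ) ≤ Real.sqrt x := Real.sqrt_nonneg x
    have hf : 0 < f (Real.sqrt x) := hpos _ (Real.sqrt_pos.mpr hx)
    rw [Real.norm_eq_abs, abs_of_nonneg (by positivity)]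
    have key : (Real.sqrt x * f (Real.sqrt x) - 1)^2 ≥ 0 := sq_nonneg _
    have hsq : (Real.sqrt x * f (Real.sqrt x))^2 = x * f (Real.sqrt x)^2 := by
      rw [mul_pow, Real.sq_sqrt hx.le]
    simp only [Pi.add_apply]
    nlinarith
  have hIuv : Integrable (fun x => u x * v x) μ := by
    refine Integrable.congr hIsq ?_
    filter_upwards [haex] with x hx using (huv x hx).symm
  -- the three scalars
  set I : ℝ := ∫ x, Real.sqrt x * f (Real.sqrt x) ∂μ with hIdef
  set T : ℝ := ∫ x, v x ^ 2 ∂μ with hTdef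
  have hmM : m = ∫ x, u x ^ 2 ∂μ := by
    rw [hm]
    refine integral_congr_ae ?_
    filter_upwards [haex] with x hx using (hu2 x hx).symm
  have hIuvI : ∫ x, u x * v x ∂μ = I := by
    refine integral_congr_ae ?_
    filter_upwards [haex] with x hx using huv x hx
  have hTsum : T = (∫ x, x * f (Real.sqrt x) ^ 2 ∂μ) + ρ * ∫ x, f (Real.sqrt x) ^ 2 ∂μ := by
    rw [hTdef, ← integral_const_mul, ← integral_add hint1 (hint2.const_mul ρ)]
    refine integral_congr_ae ?_
    filter_upwards [haex] with x hx using hv2 x hx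
  -- positivity of the scalars
  have hsupp : ∀ {h : ℝ → ℝ}, (∀ x ∈ Set.Ioo a b, h x ≠ 0) → 0 < μ (Function.support h) := by
    intro h hh
    refine lt_of_lt_of_le (mp_Ioo_pos hc0 hc1) (measure_mono ?_)
    intro x hx
    exact hh x hx
  have hIoo_pos : ∀ x ∈ Set.Ioo a b, 0 < x := fun x hx => lt_of_le_of_lt ha0.le hx.1
  have hIpos : 0 < I := by
    rw [hIdef]
    rw [integral_pos_iff_support_of_nonneg_ae ?_ hIsq]
    · refine hsupp fun x hx => ?_
      have hx0 := hIoo_pos x hx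
      have h1 : 0 < Real.sqrt x := Real.sqrt_pos.mpr hx0
      have h2 := hpos _ h1
      positivity
    · filter_upwards [haex] with x hx
      have h1 : 0 < Real.sqrt x := Real.sqrt_pos.mpr hx
      have h2 := hpos _ h1
      positivity
  have hmpos : 0 < m := by
    rw [hmM]
    rw [integral_pos_iff_support_of_nonneg_ae (Filter.Eventually.of_forall fun x => sq_nonneg _) hIu2]
    refine hsupp fun x hx => ?_
    have hx0 := hIoo_pos x hx
    have : 0 < u x ^ 2 := by rw [hu2 x hx0]; apply div_pos hx0; linarith
    intro hu0
    rw [hu0] at this; norm_num at this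
  have hg2pos : 0 < ∫ x, f (Real.sqrt x) ^ 2 ∂μ := by
    rw [integral_pos_iff_support_of_nonneg_ae (Filter.Eventually.of_forall fun x => sq_nonneg _) hint2]
    refine hsupp fun x hx => ?_
    have hx0 := hIoo_pos x hx
    have h2 := hpos _ (Real.sqrt_pos.mpr hx0)
    positivity
  have hxg2nonneg : 0 ≤ ∫ x, x * f (Real.sqrt x) ^ 2 ∂μ := by
    refine integral_nonneg_of_ae ?_
    filter_upwards [haex] with x hx
    positivity
  have hTpos : 0 < T := by rw [hTsum]; nlinarith
  -- rewrite SNR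
  have hJ : (∫ x, (Real.sqrt x * f (Real.sqrt x)) ^ 2 ∂μ) = ∫ x, x * f (Real.sqrt x) ^ 2 ∂μ := by
    refine integral_congr_ae ?_
    filter_upwards [haex] with x hx
    rw [mul_pow, Real.sq_sqrt hx.le]
  have hopt' : I ^ 2 / (T - I ^ 2) = m / (1 - m) := by
    rw [← hopt, SNR, ← hμdef, ← hIdef, hJ, hTsum]
    congr 1
    ring
  -- derive I^2 = m * T
  have hMT : I ^ 2 = m * T := by
    by_cases hTI : T - I ^ 2 = 0
    · rw [hTI, div_zero] at hopt'
      rcases div_eq_zero_iff.mp hopt'.symm with h | h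
      · exact absurd h hmpos.ne'
      · have : m = 1 := by linarith
        rw [this, one_mul]; linarith
    · have h1m : 1 - m ≠ 0 := by
        intro h1m
        rw [h1m, div_zero] at hopt'
        rcases div_eq_zero_iff.mp hopt' with h | h
        · exact absurd h (by positivity)
        · exact hTI h
      have := (div_eq_div_iff hTI h1m).mp hopt'
      linear_combination this
  -- the quadratic vanishes
  set t₀ : ℝ := I / m with ht₀def
  have ht₀pos : 0 < t₀ := div_pos hIpos hmpos
  have hIexp : Integrable (fun x => t₀ ^ 2 * u x ^ 2 - 2 * t₀ * (u x * v x) + v x ^ 2) μ :=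
    ((hIu2.const_mul _).sub (hIuv.const_mul _)).add hIv2
  have hzero : ∫ x, (t₀ * u x - v x) ^ 2 ∂μ = 0 := by
    have hexp : (fun x => (t₀ * u x - v x) ^ 2)
        = fun x => t₀ ^ 2 * u x ^ 2 - 2 * t₀ * (u x * v x) + v x ^ 2 := by
      funext x; ring
    have h1 : Integrable (fun x => t₀ ^ 2 * u x ^ 2) μ := hIu2.const_mul _
    have h2 : Integrable (fun x => 2 * t₀ * (u x * v x)) μ := hIuv.const_mul _
    have h12 : Integrable (fun x => t₀ ^ 2 * u x ^ 2 - 2 * t₀ * (u x * v x)) μ := h1.sub h2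
    rw [hexp, integral_add h12 hIv2, integral_sub h1 h2, integral_const_mul,
      integral_const_mul, hIuvI, ← hmM, ← hTdef, ht₀def]
    field_simp
    linear_combination (-1) * hMT
  have haeq : ∀ᵐ x ∂μ, t₀ * u x = v x := by
    have h0 : (fun x => (t₀ * u x - v x) ^ 2) =ᵐ[μ] 0 := by
      refine (integral_eq_zero_iff_of_nonneg_ae (Filter.Eventually.of_forall fun x => sq_nonneg _)
        ?_).mp hzero
      refine hIexp.congr ?_
      filter_upwards with x
      ring
    filter_upwards [h0] with x hx
    have := pow_eq_zero_iff (n := 2) (by norm_num) |>.mp hx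
    linarith [sub_eq_zero.mp this]
  -- a.e. formula for f on (a, b) w.r.t. μ
  have hform : ∀ᵐ x ∂μ, f (Real.sqrt x) = t₀ * Real.sqrt x / (x + ρ) := by
    filter_upwards [haeq, haex] with x heq hx
    have hxρ : (0:ℝ) < x + ρ := by linarith
    have hs : (0:ℝ) < Real.sqrt (x + ρ) := Real.sqrt_pos.mpr hxρ
    have hss : Real.sqrt (x + ρ) * Real.sqrt (x + ρ) = x + ρ := Real.mul_self_sqrt hxρ.le
    rw [hudef, hvdef] at heq
    simp only at heq
    rw [eq_div_iff hxρ.ne']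
    have h1 := congrArg (fun z => z * Real.sqrt (x + ρ)) heq
    rw [mul_assoc, div_mul_cancel₀ _ hs.ne'] at h1
    rw [← hss]
    linear_combination -h1
  -- transfer to volume on (a, b)
  have hform2 : ∀ᵐ x ∂(volume.restrict (Set.Ioo a b)),
      f (Real.sqrt x) = t₀ * Real.sqrt x / (x + ρ) :=
    (vol_Ioo_ac hc0 hc1).ae_le hform
  refine ⟨t₀ ^ 2, by positivity, ?_⟩
  have hsqrtα : Real.sqrt (t₀ ^ 2) = t₀ := Real.sqrt_sq ht₀pos.le
  -- bad sets
  set S : Set ℝ := {x | ¬ f (Real.sqrt x) = t₀ * Real.sqrt x / (x + ρ)} with hSdef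
  have hSmeas : MeasurableSet S := by
    have : MeasurableSet {x : ℝ | f (Real.sqrt x) = t₀ * Real.sqrt x / (x + ρ)} :=
      measurableSet_eq_fun (hmeas.comp Real.continuous_sqrt.measurable) (by fun_prop)
    exact this.compl
  have hSnull : volume (S ∩ Set.Ioo a b) = 0 := by
    have := ae_iff.mp hform2
    rwa [Measure.restrict_apply hSmeas] at this
  rw [ae_iff, Measure.restrict_apply]
  swap
  · have : MeasurableSet {x : ℝ | f x = Real.sqrt (t₀ ^ 2) * x / (x ^ 2 + ρ)} :=
      measurableSet_eq_fun hmeas (by fun_prop)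
    exact this.compl
  -- bad set is contained in the sqrt-image of a null set
  have hsub : {x | ¬ f x = Real.sqrt (t₀ ^ 2) * x / (x ^ 2 + ρ)}
      ∩ Set.Ioo (Real.sqrt a) (Real.sqrt b) ⊆ Real.sqrt '' (S ∩ Set.Ioo a b) := by
    rintro y ⟨hyB, hy1, hy2⟩
    have hsa : 0 < Real.sqrt a := Real.sqrt_pos.mpr ha0
    have hy0 : 0 < y := lt_trans hsa hy1
    have hy2ab : y ^ 2 ∈ Set.Ioo a b := by
      constructor
      · calc a = Real.sqrt a ^ 2 := (Real.sq_sqrt ha0.le).symm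
          _ < y ^ 2 := by nlinarith
      · calc y ^ 2 < Real.sqrt b ^ 2 := by nlinarith [Real.sqrt_nonneg b]
          _ = b := Real.sq_sqrt (by positivity)
    refine ⟨y ^ 2, ⟨?_, hy2ab⟩, Real.sqrt_sq hy0.le⟩
    rw [hSdef, Set.mem_setOf_eq, Real.sqrt_sq hy0.le]
    intro hcontra
    apply hyB
    rw [hsqrtα]
    exact hcontra
  refine measure_mono_null hsub ?_
  -- sqrt is Lipschitz on (a, b)
  have hlip : LipschitzOnWith (Real.toNNReal (1 / (2 * Real.sqrt a))) Real.sqrt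
      (S ∩ Set.Ioo a b) := by
    refine LipschitzOnWith.of_dist_le_mul fun x hx y hy => ?_
    have hxa := hx.2.1
    have hya := hy.2.1
    have hx0 : 0 < x := lt_trans ha0 hxa
    have hy0 : 0 < y := lt_trans ha0 hya
    have hsa : 0 < Real.sqrt a := Real.sqrt_pos.mpr ha0
    have hsx : Real.sqrt a ≤ Real.sqrt x := Real.sqrt_le_sqrt hxa.le
    have hsy : Real.sqrt a ≤ Real.sqrt y := Real.sqrt_le_sqrt hya.le
    rw [Real.dist_eq, Real.dist_eq]
    rw [Real.coe_toNNReal _ (by positivity)]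
    have hkey : (Real.sqrt x - Real.sqrt y) * (Real.sqrt x + Real.sqrt y) = x - y := by
      have h1 : Real.sqrt x * Real.sqrt x = x := Real.mul_self_sqrt hx0.le
      have h2 : Real.sqrt y * Real.sqrt y = y := Real.mul_self_sqrt hy0.le
      ring_nf
      linarith
    have hsum : 0 < Real.sqrt x + Real.sqrt y := by linarith
    have habs : |Real.sqrt x - Real.sqrt y| * (Real.sqrt x + Real.sqrt y) = |x - y| := by
      rw [← abs_of_pos hsum, ← abs_mul, hkey]
    rw [div_mul_eq_mul_div, le_div_iff₀ (by positivity)]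
    calc |Real.sqrt x - Real.sqrt y| * (2 * Real.sqrt a)
        ≤ |Real.sqrt x - Real.sqrt y| * (Real.sqrt x + Real.sqrt y) :=
          mul_le_mul_of_nonneg_left (by linarith) (abs_nonneg _)
      _ = |x - y| := habs
      _ = 1 * |x - y| := (one_mul _).symm
  have himg := hlip.hausdorffMeasure_image_le (d := 1) zero_le_one
  rw [MeasureTheory.hausdorffMeasure_real] at himg
  refine le_antisymm (le_trans himg ?_) zero_le
  rw [hSnull, mul_zero]
end

section
/- Let γ > 1, σ ≥ 0, c = 1/γ, ρ* = (1 − 2/π + σ²)/((2/π)γ), and let λ have law μ_c with d = √λ. For the zero-forcing choice f(x) = x^{−1}, the asymptotic SNR equals SNR(f) := (E[d f(d)])² / ( Var[d f(d)] + ρ* E[f(d)²] ) = (2/π)(γ − 1) / (1 − 2/π + σ²). -/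
open MeasureTheory Real
open scoped NNReal ENNReal

lemma mpDensity_zero_of_le {c x : ℝ} (hx : x ≤ (1 - Real.sqrt c) ^ 2) : mpDensity c x = 0 := by
  rw [mpDensity, max_eq_right (by linarith), zero_mul, Real.sqrt_zero, zero_div]

lemma mpDensity_zero_of_ge {c x : ℝ} (hx : (1 + Real.sqrt c) ^ 2 ≤ x) : mpDensity c x = 0 := by
  rw [mpDensity, max_eq_right (a := (1 + Real.sqrt c) ^ 2 - x) (by linarith), mul_zero,
    Real.sqrt_zero, zero_div]

lemma mpDensity_meas_s14 (c : ℝ) : Measurable (mpDensity c) := by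
  unfold mpDensity
  fun_prop


lemma restrict_helper (a b : ℝ) (ha : 0 < a) (f : ℝ → ℝ)
    (hf : ∀ x, 0 < x → x ∉ Set.Ioc a b → f x = 0) :
    ∫ x in Set.Ioi (0:ℝ), f x = ∫ x in Set.Ioc a b, f x := by
  have hsub : Set.Ioc a b ⊆ Set.Ioi (0:ℝ) := fun x hx => lt_of_le_of_lt ha.le hx.1
  have hae : ∀ᵐ x ∂(volume : Measure ℝ), x ∈ Set.Ioi (0:ℝ) \ Set.Ioc a b → f x = 0 := by
    filter_upwards with x hx
    exact hf x hx.1 hx.2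
  exact setIntegral_eq_of_subset_of_ae_diff_eq_zero (μ := volume) (f := f)
    (t := Set.Ioi 0) (s := Set.Ioc a b) measurableSet_Ioi.nullMeasurableSet hsub hae

set_option maxHeartbeats 1000000 in
lemma mp_int (c : ℝ) (hc0 : 0 < c) (hc1 : c < 1) (φ : ℝ → ℝ) (hφ : Measurable φ) :
    ∫ x, φ x ∂mpMeasure c
      = ∫ x in ((1 - Real.sqrt c) ^ 2)..((1 + Real.sqrt c) ^ 2), φ x * mpDensity c x := by
  have hs0 : 0 < Real.sqrt c := Real.sqrt_pos.mpr hc0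
  have hs1 : Real.sqrt c < 1 := by
    have := Real.sqrt_lt_sqrt hc0.le hc1
    simpa using this
  have ha : 0 < (1 - Real.sqrt c) ^ 2 := pow_pos (by linarith) 2
  have hab : (1 - Real.sqrt c) ^ 2 < (1 + Real.sqrt c) ^ 2 := by nlinarith
  have hmeq : mpMeasure c = (volume.restrict (Set.Ioi (0:ℝ))).withDensity
      (fun x => ((Real.toNNReal (mpDensity c x) : ℝ≥0) : ℝ≥0∞)) := rfl
  have h0 : ∫ x, φ x ∂mpMeasure c = ∫ x in Set.Ioi (0:ℝ), Real.toNNReal (mpDensity c x) • φ x := by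
    rw [hmeq]
    exact integral_withDensity_eq_integral_smul ((mpDensity_meas_s14 c).real_toNNReal) φ
  rw [h0]
  have h1 : ∫ x in Set.Ioi (0:ℝ), Real.toNNReal (mpDensity c x) • φ x
      = ∫ x in Set.Ioc ((1 - Real.sqrt c) ^ 2) ((1 + Real.sqrt c) ^ 2),
          Real.toNNReal (mpDensity c x) • φ x := by
    apply restrict_helper _ _ ha
    intro x hx1 hx2
    rcases le_or_gt x ((1 - Real.sqrt c) ^ 2) with h | h
    · rw [mpDensity_zero_of_le h]; simp
    · have : (1 + Real.sqrt c) ^ 2 ≤ x := by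
        by_contra hcon
        exact hx2 ⟨h, le_of_not_ge hcon⟩
      rw [mpDensity_zero_of_ge this]; simp
  rw [h1, ← intervalIntegral.integral_of_le hab.le]
  apply intervalIntegral.integral_congr
  intro x hx
  rw [Set.uIcc_of_le hab.le] at hx
  have hx0 : 0 < x := lt_of_lt_of_le ha hx.1
  have hd : 0 ≤ mpDensity c x := by
    rw [mpDensity]
    positivity
  simp [NNReal.smul_def, Real.coe_toNNReal _ hd, mul_comm]

lemma mp_L1 (m g h : ℝ) (hh : 0 < h) (hg : 0 < g) (hmh : 0 < m - h)
    (hgg : g ^ 2 = m ^ 2 - h ^ 2) :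
    ∫ x in (m - h)..(m + h), Real.sqrt ((x - (m - h)) * ((m + h) - x)) / x
      = π * (m - g) := by
  have hab : m - h < m + h := by linarith
  have hmh2 : 0 < m + h := by linarith
  have hcontR : Continuous fun x : ℝ => Real.sqrt ((x - (m - h)) * ((m + h) - x)) := by
    exact Real.continuous_sqrt.comp (by continuity)
  set F : ℝ → ℝ := fun x => Real.sqrt ((x - (m - h)) * ((m + h) - x))
      + m * Real.arcsin ((x - m) / h) - g * Real.arcsin ((m * x - g ^ 2) / (h * x)) with hFdef
  have hderiv : ∀ x ∈ Set.Ioo (m - h) (m + h),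
      HasDerivAt F (Real.sqrt ((x - (m - h)) * ((m + h) - x)) / x) x := by
    intro x hx
    obtain ⟨hx1, hx2⟩ := hx
    have hx0 : 0 < x := lt_trans hmh hx1
    have hq : 0 < (x - (m - h)) * ((m + h) - x) := mul_pos (by linarith) (by linarith)
    have hRpos : 0 < Real.sqrt ((x - (m - h)) * ((m + h) - x)) := Real.sqrt_pos.mpr hq
    have hRsq : Real.sqrt ((x - (m - h)) * ((m + h) - x)) ^ 2 = (x - (m - h)) * ((m + h) - x) :=
      Real.sq_sqrt hq.le
    have d1 : HasDerivAt (fun x : ℝ => Real.sqrt ((x - (m - h)) * ((m + h) - x)))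
        (1 / (2 * Real.sqrt ((x - (m - h)) * ((m + h) - x)))
          * (1 * ((m + h) - x) + (x - (m - h)) * (-1))) x := by
      have h1 : HasDerivAt (fun x : ℝ => x - (m - h)) 1 x := (hasDerivAt_id x).sub_const _
      have h2 : HasDerivAt (fun x : ℝ => (m + h) - x) (-1) x := by
        simpa using (hasDerivAt_id x).const_sub (m + h)
      exact (Real.hasDerivAt_sqrt hq.ne').comp x (h1.mul h2)
    have hv1 : (-1 : ℝ) < (x - m) / h := by rw [lt_div_iff₀ hh]; linarith
    have hv2 : (x - m) / h < 1 := by rw [div_lt_one hh]; linarith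
    have d2 : HasDerivAt (fun x : ℝ => Real.arcsin ((x - m) / h))
        (1 / Real.sqrt (1 - ((x - m) / h) ^ 2) * (1 / h)) x := by
      have hi : HasDerivAt (fun x : ℝ => (x - m) / h) (1 / h) x := by
        simpa using ((hasDerivAt_id x).sub_const m).div_const h
      exact (Real.hasDerivAt_arcsin hv1.ne' hv2.ne).comp x hi
    have hid : (h * x) ^ 2 - (m * x - g ^ 2) ^ 2
        = g ^ 2 * ((x - (m - h)) * ((m + h) - x)) := by
      linear_combination (2 * m * x - (g ^ 2 + (m ^ 2 - h ^ 2))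
        - ((x - (m - h)) * ((m + h) - x))) * hgg
    have hA2 : ((m * x - g ^ 2) / (h * x)) ^ 2 < 1 := by
      rw [div_pow, div_lt_one (by positivity)]
      nlinarith [mul_pos (mul_pos hg hg) hq]
    have hA1 : -1 < (m * x - g ^ 2) / (h * x) := by nlinarith [hA2]
    have hA1' : (m * x - g ^ 2) / (h * x) < 1 := by nlinarith [hA2]
    have di : HasDerivAt (fun x : ℝ => (m * x - g ^ 2) / (h * x))
        ((m * (h * x) - (m * x - g ^ 2) * h) / (h * x) ^ 2) x := by
      have hn : HasDerivAt (fun x : ℝ => m * x - g ^ 2) m x := by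
        simpa using ((hasDerivAt_id x).const_mul m).sub_const (g ^ 2)
      have hd : HasDerivAt (fun x : ℝ => h * x) h x := by
        simpa using (hasDerivAt_id x).const_mul h
      exact hn.div hd (by positivity)
    have d3 : HasDerivAt (fun x : ℝ => Real.arcsin ((m * x - g ^ 2) / (h * x)))
        (1 / Real.sqrt (1 - ((m * x - g ^ 2) / (h * x)) ^ 2)
          * ((m * (h * x) - (m * x - g ^ 2) * h) / (h * x) ^ 2)) x :=
      by exact (Real.hasDerivAt_arcsin hA1.ne' hA1'.ne).comp x di
    have hs1' : Real.sqrt (1 - ((x - m) / h) ^ 2)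
        = Real.sqrt ((x - (m - h)) * ((m + h) - x)) / h := by
      rw [show (1 : ℝ) - ((x - m) / h) ^ 2 = ((x - (m - h)) * ((m + h) - x)) / h ^ 2 by
        field_simp; ring]
      rw [Real.sqrt_div hq.le, Real.sqrt_sq hh.le]
    have hs2' : Real.sqrt (1 - ((m * x - g ^ 2) / (h * x)) ^ 2)
        = g * Real.sqrt ((x - (m - h)) * ((m + h) - x)) / (h * x) := by
      rw [show (1 : ℝ) - ((m * x - g ^ 2) / (h * x)) ^ 2
          = (g ^ 2 * ((x - (m - h)) * ((m + h) - x))) / (h * x) ^ 2 by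
        rw [← hid]; field_simp]
      rw [Real.sqrt_div (by positivity), Real.sqrt_sq (by positivity),
        Real.sqrt_mul (by positivity), Real.sqrt_sq hg.le]
    have dF := (d1.add (d2.const_mul m)).sub (d3.const_mul g)
    refine dF.congr_deriv (Eq.symm ?_)
    rw [hs1', hs2']
    have hRsq' : Real.sqrt ((x - (m - h)) * ((m + h) - x)) * Real.sqrt ((x - (m - h)) * ((m + h) - x)) = (x - (m - h)) * ((m + h) - x) := Real.mul_self_sqrt hq.le
    field_simp
    linear_combination 2 * hRsq + 2 * hgg
  have hcontF : ContinuousOn F (Set.Icc (m - h) (m + h)) := by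
    apply ContinuousOn.sub
    · exact (hcontR.continuousOn).add
        (continuousOn_const.mul (Real.continuous_arcsin.comp_continuousOn
          (by fun_prop)))
    · apply continuousOn_const.mul
      apply Real.continuous_arcsin.comp_continuousOn
      apply ContinuousOn.div (by fun_prop) (by fun_prop)
      intro x hx
      have : 0 < x := lt_of_lt_of_le hmh hx.1
      positivity
  have hint : IntervalIntegrable
      (fun x => Real.sqrt ((x - (m - h)) * ((m + h) - x)) / x) volume (m - h) (m + h) := by
    apply ContinuousOn.intervalIntegrable
    rw [Set.uIcc_of_le hab.le]
    apply ContinuousOn.div hcontR.continuousOn continuousOn_id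
    intro x hx
    exact (lt_of_lt_of_le hmh hx.1).ne'
  rw [intervalIntegral.integral_eq_sub_of_hasDerivAt_of_le hab.le hcontF hderiv hint]
  have e1 : F (m + h) = m * (π / 2) - g * (π / 2) := by
    simp only [hFdef]
    rw [show ((m + h) - (m - h)) * ((m + h) - (m + h)) = 0 by ring, Real.sqrt_zero,
      show ((m + h) - m) / h = 1 by field_simp; ring,
      show (m * (m + h) - g ^ 2) / (h * (m + h)) = 1 by
        rw [div_eq_one_iff_eq (by positivity)]; linarith [hgg],
      Real.arcsin_one]
    ring
  have e2 : F (m - h) = m * (-(π / 2)) - g * (-(π / 2)) := by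
    simp only [hFdef]
    rw [show ((m - h) - (m - h)) * ((m + h) - (m - h)) = 0 by ring, Real.sqrt_zero,
      show ((m - h) - m) / h = -1 by field_simp; ring,
      show (m * (m - h) - g ^ 2) / (h * (m - h)) = -1 by
        rw [div_eq_iff (by positivity)]; linarith [hgg],
      Real.arcsin_neg_one]
    ring
  rw [e1, e2]; ring

lemma mp_L2 (m g h : ℝ) (hh : 0 < h) (hg : 0 < g) (hmh : 0 < m - h)
    (hgg : g ^ 2 = m ^ 2 - h ^ 2) :
    ∫ x in (m - h)..(m + h), Real.sqrt ((x - (m - h)) * ((m + h) - x)) / x ^ 2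
      = π * (m - g) / g := by
  have hab : m - h < m + h := by linarith
  have hmh2 : 0 < m + h := by linarith
  have hcontR : Continuous fun x : ℝ => Real.sqrt ((x - (m - h)) * ((m + h) - x)) := by
    exact Real.continuous_sqrt.comp (by continuity)
  set F : ℝ → ℝ := fun x => -(Real.sqrt ((x - (m - h)) * ((m + h) - x)) / x)
      + (m / g) * Real.arcsin ((m * x - g ^ 2) / (h * x)) - Real.arcsin ((x - m) / h) with hFdef
  have hderiv : ∀ x ∈ Set.Ioo (m - h) (m + h),
      HasDerivAt F (Real.sqrt ((x - (m - h)) * ((m + h) - x)) / x ^ 2) x := by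
    intro x hx
    obtain ⟨hx1, hx2⟩ := hx
    have hx0 : 0 < x := lt_trans hmh hx1
    have hq : 0 < (x - (m - h)) * ((m + h) - x) := mul_pos (by linarith) (by linarith)
    have hRpos : 0 < Real.sqrt ((x - (m - h)) * ((m + h) - x)) := Real.sqrt_pos.mpr hq
    have hRsq : Real.sqrt ((x - (m - h)) * ((m + h) - x)) ^ 2 = (x - (m - h)) * ((m + h) - x) :=
      Real.sq_sqrt hq.le
    have d1 : HasDerivAt (fun x : ℝ => Real.sqrt ((x - (m - h)) * ((m + h) - x)))
        (1 / (2 * Real.sqrt ((x - (m - h)) * ((m + h) - x)))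
          * (1 * ((m + h) - x) + (x - (m - h)) * (-1))) x := by
      have h1 : HasDerivAt (fun x : ℝ => x - (m - h)) 1 x := (hasDerivAt_id x).sub_const _
      have h2 : HasDerivAt (fun x : ℝ => (m + h) - x) (-1) x := by
        simpa using (hasDerivAt_id x).const_sub (m + h)
      exact (Real.hasDerivAt_sqrt hq.ne').comp x (h1.mul h2)
    have hv1 : (-1 : ℝ) < (x - m) / h := by rw [lt_div_iff₀ hh]; linarith
    have hv2 : (x - m) / h < 1 := by rw [div_lt_one hh]; linarith
    have d2 : HasDerivAt (fun x : ℝ => Real.arcsin ((x - m) / h))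
        (1 / Real.sqrt (1 - ((x - m) / h) ^ 2) * (1 / h)) x := by
      have hi : HasDerivAt (fun x : ℝ => (x - m) / h) (1 / h) x := by
        simpa using ((hasDerivAt_id x).sub_const m).div_const h
      exact (Real.hasDerivAt_arcsin hv1.ne' hv2.ne).comp x hi
    have hid : (h * x) ^ 2 - (m * x - g ^ 2) ^ 2
        = g ^ 2 * ((x - (m - h)) * ((m + h) - x)) := by
      linear_combination (2 * m * x - (g ^ 2 + (m ^ 2 - h ^ 2))
        - ((x - (m - h)) * ((m + h) - x))) * hgg
    have hA2 : ((m * x - g ^ 2) / (h * x)) ^ 2 < 1 := by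
      rw [div_pow, div_lt_one (by positivity)]
      nlinarith [mul_pos (mul_pos hg hg) hq]
    have hA1 : -1 < (m * x - g ^ 2) / (h * x) := by nlinarith [hA2]
    have hA1' : (m * x - g ^ 2) / (h * x) < 1 := by nlinarith [hA2]
    have di : HasDerivAt (fun x : ℝ => (m * x - g ^ 2) / (h * x))
        ((m * (h * x) - (m * x - g ^ 2) * h) / (h * x) ^ 2) x := by
      have hn : HasDerivAt (fun x : ℝ => m * x - g ^ 2) m x := by
        simpa using ((hasDerivAt_id x).const_mul m).sub_const (g ^ 2)
      have hd : HasDerivAt (fun x : ℝ => h * x) h x := by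
        simpa using (hasDerivAt_id x).const_mul h
      exact hn.div hd (by positivity)
    have d3 : HasDerivAt (fun x : ℝ => Real.arcsin ((m * x - g ^ 2) / (h * x)))
        (1 / Real.sqrt (1 - ((m * x - g ^ 2) / (h * x)) ^ 2)
          * ((m * (h * x) - (m * x - g ^ 2) * h) / (h * x) ^ 2)) x :=
      by exact (Real.hasDerivAt_arcsin hA1.ne' hA1'.ne).comp x di
    have hs1' : Real.sqrt (1 - ((x - m) / h) ^ 2)
        = Real.sqrt ((x - (m - h)) * ((m + h) - x)) / h := by
      rw [show (1 : ℝ) - ((x - m) / h) ^ 2 = ((x - (m - h)) * ((m + h) - x)) / h ^ 2 by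
        field_simp; ring]
      rw [Real.sqrt_div hq.le, Real.sqrt_sq hh.le]
    have hs2' : Real.sqrt (1 - ((m * x - g ^ 2) / (h * x)) ^ 2)
        = g * Real.sqrt ((x - (m - h)) * ((m + h) - x)) / (h * x) := by
      rw [show (1 : ℝ) - ((m * x - g ^ 2) / (h * x)) ^ 2
          = (g ^ 2 * ((x - (m - h)) * ((m + h) - x))) / (h * x) ^ 2 by
        rw [← hid]; field_simp]
      rw [Real.sqrt_div (by positivity), Real.sqrt_sq (by positivity),
        Real.sqrt_mul (by positivity), Real.sqrt_sq hg.le]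
    have dR : HasDerivAt (fun x : ℝ => Real.sqrt ((x - (m - h)) * ((m + h) - x)) / x)
        ((1 / (2 * Real.sqrt ((x - (m - h)) * ((m + h) - x)))
          * (1 * ((m + h) - x) + (x - (m - h)) * (-1)) * x
          - Real.sqrt ((x - (m - h)) * ((m + h) - x)) * 1) / x ^ 2) x :=
      d1.div (hasDerivAt_id x) hx0.ne'
    have dF := (dR.neg.add (d3.const_mul (m / g))).sub d2
    refine dF.congr_deriv (Eq.symm ?_)
    rw [hs1', hs2']
    have hRsq' : Real.sqrt ((x - (m - h)) * ((m + h) - x)) * Real.sqrt ((x - (m - h)) * ((m + h) - x)) = (x - (m - h)) * ((m + h) - x) := Real.mul_self_sqrt hq.le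
    field_simp
    ring
  have hxne : ∀ x ∈ Set.Icc (m - h) (m + h), x ≠ 0 := fun x hx =>
    (lt_of_lt_of_le hmh hx.1).ne'
  have hcontF : ContinuousOn F (Set.Icc (m - h) (m + h)) := by
    apply ContinuousOn.sub
    · apply ContinuousOn.add
      · exact (hcontR.continuousOn.div continuousOn_id hxne).neg
      · apply continuousOn_const.mul
        apply Real.continuous_arcsin.comp_continuousOn
        apply ContinuousOn.div (by fun_prop) (by fun_prop)
        intro x hx
        have : 0 < x := lt_of_lt_of_le hmh hx.1
        positivity
    · exact (Real.continuous_arcsin.comp_continuousOn (by fun_prop))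
  have hint : IntervalIntegrable
      (fun x => Real.sqrt ((x - (m - h)) * ((m + h) - x)) / x ^ 2) volume (m - h) (m + h) := by
    apply ContinuousOn.intervalIntegrable
    rw [Set.uIcc_of_le hab.le]
    apply ContinuousOn.div hcontR.continuousOn (by fun_prop)
    intro x hx
    have : 0 < x := lt_of_lt_of_le hmh hx.1
    positivity
  rw [intervalIntegral.integral_eq_sub_of_hasDerivAt_of_le hab.le hcontF hderiv hint]
  have e1 : F (m + h) = (m / g) * (π / 2) - π / 2 := by
    simp only [hFdef]
    rw [show ((m + h) - (m - h)) * ((m + h) - (m + h)) = 0 by ring, Real.sqrt_zero,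
      show ((m + h) - m) / h = 1 by field_simp; ring,
      show (m * (m + h) - g ^ 2) / (h * (m + h)) = 1 by
        rw [div_eq_one_iff_eq (by positivity)]; linarith [hgg],
      Real.arcsin_one]
    ring
  have e2 : F (m - h) = (m / g) * (-(π / 2)) - (-(π / 2)) := by
    simp only [hFdef]
    rw [show ((m - h) - (m - h)) * ((m + h) - (m - h)) = 0 by ring, Real.sqrt_zero,
      show ((m - h) - m) / h = -1 by field_simp; ring,
      show (m * (m - h) - g ^ 2) / (h * (m - h)) = -1 by
        rw [div_eq_iff (by positivity)]; linarith [hgg],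
      Real.arcsin_neg_one]
    ring
  rw [e1, e2]; field_simp; ring

lemma mp_setup (c : ℝ) (hc0 : 0 < c) (hc1 : c < 1) :
    0 < Real.sqrt c ∧ Real.sqrt c < 1 ∧ Real.sqrt c ^ 2 = c ∧
    0 < (1 - Real.sqrt c) ^ 2 ∧ (1 - Real.sqrt c) ^ 2 < (1 + Real.sqrt c) ^ 2 := by
  have hs0 : 0 < Real.sqrt c := Real.sqrt_pos.mpr hc0
  have hs1 : Real.sqrt c < 1 := by
    have := Real.sqrt_lt_sqrt hc0.le hc1
    simpa using this
  have hsq : Real.sqrt c ^ 2 = c := Real.sq_sqrt hc0.le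
  exact ⟨hs0, hs1, hsq, pow_pos (by linarith) 2, by nlinarith⟩

lemma mp_E1 (c : ℝ) (hc0 : 0 < c) (hc1 : c < 1) :
    ∫ x, Real.sqrt x * (Real.sqrt x)⁻¹ ∂mpMeasure c = 1 := by
  obtain ⟨hs0, hs1, hsq, ha, hab⟩ := mp_setup c hc0 hc1
  have hπ : (0:ℝ) < π := Real.pi_pos
  have ea : (1 - Real.sqrt c) ^ 2 = (1 + c) - 2 * Real.sqrt c := by linear_combination hsq
  have eb : (1 + Real.sqrt c) ^ 2 = (1 + c) + 2 * Real.sqrt c := by linear_combination hsq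
  rw [mp_int c hc0 hc1 _ (by fun_prop)]
  have hcongr : ∀ x ∈ Set.uIcc ((1 - Real.sqrt c) ^ 2) ((1 + Real.sqrt c) ^ 2),
      Real.sqrt x * (Real.sqrt x)⁻¹ * mpDensity c x
        = Real.sqrt ((x - ((1 + c) - 2 * Real.sqrt c)) * (((1 + c) + 2 * Real.sqrt c) - x)) / x
            * (2 * π * c)⁻¹ := by
    intro x hx
    rw [Set.uIcc_of_le hab.le] at hx
    have hx0 : 0 < x := lt_of_lt_of_le ha hx.1
    have hsx : 0 < Real.sqrt x := Real.sqrt_pos.mpr hx0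
    rw [mul_inv_cancel₀ hsx.ne', mpDensity,
      max_eq_left (by linarith [hx.1] : (0:ℝ) ≤ x - (1 - Real.sqrt c) ^ 2),
      max_eq_left (by linarith [hx.2] : (0:ℝ) ≤ (1 + Real.sqrt c) ^ 2 - x), ← ea, ← eb]
    ring
  rw [intervalIntegral.integral_congr hcongr, intervalIntegral.integral_mul_const, ea, eb,
    mp_L1 (1 + c) (1 - c) (2 * Real.sqrt c) (by positivity) (by linarith)
      (by rw [← ea]; exact ha) (by linear_combination 4 * hsq)]
  field_simp
  ring

lemma mp_E2 (c : ℝ) (hc0 : 0 < c) (hc1 : c < 1) :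
    ∫ x, (Real.sqrt x * (Real.sqrt x)⁻¹) ^ 2 ∂mpMeasure c = 1 := by
  obtain ⟨hs0, hs1, hsq, ha, hab⟩ := mp_setup c hc0 hc1
  have h1 : ∫ x, (Real.sqrt x * (Real.sqrt x)⁻¹) ^ 2 ∂mpMeasure c
      = ∫ x, Real.sqrt x * (Real.sqrt x)⁻¹ ∂mpMeasure c := by
    rw [mp_int c hc0 hc1 _ (by fun_prop), mp_int c hc0 hc1 _ (by fun_prop)]
    apply intervalIntegral.integral_congr
    intro x hx
    rw [Set.uIcc_of_le hab.le] at hx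
    have hx0 : 0 < x := lt_of_lt_of_le ha hx.1
    have hsx : 0 < Real.sqrt x := Real.sqrt_pos.mpr hx0
    simp only [mul_inv_cancel₀ hsx.ne', one_pow]
  rw [h1, mp_E1 c hc0 hc1]

lemma mp_E3 (c : ℝ) (hc0 : 0 < c) (hc1 : c < 1) :
    ∫ x, (Real.sqrt x)⁻¹ ^ 2 ∂mpMeasure c = 1 / (1 - c) := by
  obtain ⟨hs0, hs1, hsq, ha, hab⟩ := mp_setup c hc0 hc1
  have hπ : (0:ℝ) < π := Real.pi_pos
  have ea : (1 - Real.sqrt c) ^ 2 = (1 + c) - 2 * Real.sqrt c := by linear_combination hsq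
  have eb : (1 + Real.sqrt c) ^ 2 = (1 + c) + 2 * Real.sqrt c := by linear_combination hsq
  rw [mp_int c hc0 hc1 _ (by fun_prop)]
  have hcongr : ∀ x ∈ Set.uIcc ((1 - Real.sqrt c) ^ 2) ((1 + Real.sqrt c) ^ 2),
      (Real.sqrt x)⁻¹ ^ 2 * mpDensity c x
        = Real.sqrt ((x - ((1 + c) - 2 * Real.sqrt c)) * (((1 + c) + 2 * Real.sqrt c) - x)) / x ^ 2
            * (2 * π * c)⁻¹ := by
    intro x hx
    rw [Set.uIcc_of_le hab.le] at hx
    have hx0 : 0 < x := lt_of_lt_of_le ha hx.1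
    rw [← Real.sqrt_inv, Real.sq_sqrt (by positivity), mpDensity,
      max_eq_left (by linarith [hx.1] : (0:ℝ) ≤ x - (1 - Real.sqrt c) ^ 2),
      max_eq_left (by linarith [hx.2] : (0:ℝ) ≤ (1 + Real.sqrt c) ^ 2 - x), ← ea, ← eb]
    ring
  rw [intervalIntegral.integral_congr hcongr, intervalIntegral.integral_mul_const, ea, eb,
    mp_L2 (1 + c) (1 - c) (2 * Real.sqrt c) (by positivity) (by linarith)
      (by rw [← ea]; exact ha) (by linear_combination 4 * hsq)]
  have h1c : (1:ℝ) - c ≠ 0 := by linarith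
  field_simp
  ring

/-- The asymptotic SNR of the one-bit zero-forcing precoder `f(x) = x⁻¹`. -/
theorem stmt14 (γ σ : ℝ) (hγ : 1 < γ) (hσ : 0 ≤ σ)
    (c : ℝ) (hc : c = 1 / γ)
    (ρ : ℝ) (hρ : ρ = (1 - 2 / π + σ ^ 2) / ((2 / π) * γ)) :
    SNR c ρ (fun x => x⁻¹) = (2 / π) * (γ - 1) / (1 - 2 / π + σ ^ 2) := by
  have hγ0 : (0:ℝ) < γ := by linarith
  have hc0 : 0 < c := by rw [hc]; positivity
  have hc1 : c < 1 := by rw [hc, div_lt_one hγ0]; linarith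
  have hπ : (0:ℝ) < π := Real.pi_pos
  have hπ2 : (2:ℝ) < π := by linarith [Real.pi_gt_three]
  have hden : (0:ℝ) < 1 - 2 / π + σ ^ 2 := by
    have : 2 / π < 1 := (div_lt_one hπ).mpr hπ2
    nlinarith [sq_nonneg σ]
  simp only [SNR]
  rw [mp_E1 c hc0 hc1, mp_E2 c hc0 hc1, mp_E3 c hc0 hc1]
  rw [hρ, hc]
  rw [show ((1:ℝ)^2 : ℝ) = 1 from one_pow 2]
  have h1c : (0:ℝ) < 1 - 1 / γ := by
    rw [sub_pos, div_lt_one hγ0]; linarith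
  have k1 : π + π * σ ^ 2 - 2 ≠ 0 := by nlinarith [sq_nonneg σ, mul_nonneg hπ.le (sq_nonneg σ)]
  have k2 : -(γ * 2) + γ * π + γ * π * σ ^ 2 ≠ 0 := by
    have : -(γ * 2) + γ * π + γ * π * σ ^ 2 = γ * (π + π * σ ^ 2 - 2) := by ring
    rw [this]
    exact mul_ne_zero hγ0.ne' k1
  have k3 : (-2 : ℝ) + π + π * σ ^ 2 ≠ 0 := by
    intro h; apply k1; linarith
  have kp : (0:ℝ) < π - 2 + σ ^ 2 * π := by nlinarith [mul_nonneg (sq_nonneg σ) hπ.le]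
  have k4 : γ - 1 ≠ 0 := by linarith
  field_simp [k1, k2, k3, k4]
  ring
end
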